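/- arXiv:1309.1533 — 2 statements merged into one kernel-verified Lean document; each statement's English description precedes it below -/
import Mathlib

section
/- Let g be a ℤ-graded Lie superalgebra g = g_{−1} ⊕ g_0 ⊕ g_{+1} with [g_{+1}, g_{+1}] = 0 = [g_{−1}, g_{−1}], and let L(g) = g ⊗ ℂ[t,t⁻¹] be its loop superalgebra. If I is an ideal of ℂ[t,t⁻¹] and V is an L(g)-module generated by a subspace V⁰ with (g_0 ⊗ I)V⁰ = 0, (g_{+1} ⊗ ℂ[t,t⁻¹])V⁰ = 0, and (g_{−1} ⊗ I)V⁰ = 0, then (g ⊗ I)V = 0. -/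
/-!
The common kernel `W` of the operators `ρ x f` with `f ∈ I` contains `V⁰`, because every
`x ∈ 𝔤` splits into pieces from `g₋₁`, `g₀` and `g₊₁`. It is an `L(g)`-submodule: `𝔤 ⊗ I` is an
ideal of `L(g)`, so for homogeneous `x, y` the super commutator relation rewrites `ρ x f (ρ y g w)`
as `± ρ y g (ρ x f w) + ρ (B x y) (f g) w` with `f g ∈ I`, and both terms vanish on `W`. Since `V`
is generated by `V⁰`, `W = V`.
-/

namespace Module.End

variable {K V : Type*} [CommRing K] [AddCommGroup V] [Module K V]

theorem apply_apply_eq_zero_of_mul_sub_mul {φ ψ χ : Module.End K V} {w : V}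
    (h : φ * ψ - ψ * φ = χ) (hφ : φ w = 0) (hχ : χ w = 0) : φ (ψ w) = 0 := by
  have hw := congr($h w)
  simp only [LinearMap.sub_apply, mul_apply, hφ, map_zero, sub_zero, hχ] at hw
  exact hw

theorem apply_apply_eq_zero_of_mul_add_mul {φ ψ χ : Module.End K V} {w : V}
    (h : φ * ψ + ψ * φ = χ) (hφ : φ w = 0) (hχ : χ w = 0) : φ (ψ w) = 0 := by
  have hw := congr($h w)
  simp only [LinearMap.add_apply, mul_apply, hφ, map_zero, add_zero, hχ] at hw
  exact hw

end Module.End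

section LoopModule

variable {K 𝔤 A V : Type*} [CommRing K] [AddCommGroup 𝔤] [Module K 𝔤] [CommRing A] [Module K A]
  [AddCommGroup V] [Module K V]

def idealAnnihilator (ρ : 𝔤 →ₗ[K] A →ₗ[K] Module.End K V) (I : Ideal A) : Submodule K V :=
  ⨅ (x : 𝔤) (f ∈ I), LinearMap.ker (ρ x f)

theorem mem_idealAnnihilator {ρ : 𝔤 →ₗ[K] A →ₗ[K] Module.End K V} {I : Ideal A} {v : V} :
    v ∈ idealAnnihilator ρ I ↔ ∀ x, ∀ f ∈ I, ρ x f v = 0 := by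
  simp only [idealAnnihilator, Submodule.mem_iInf, LinearMap.mem_ker]

variable {g0 g1 : Submodule K 𝔤} {B : 𝔤 →ₗ[K] 𝔤 →ₗ[K] 𝔤} {ρ : 𝔤 →ₗ[K] A →ₗ[K] Module.End K V}
  {I : Ideal A}

theorem apply_apply_eq_zero_of_mem_idealAnnihilator
    (hrel0 : ∀ x ∈ g0, ∀ y : 𝔤, ∀ f g : A, ρ x f * ρ y g - ρ y g * ρ x f = ρ (B x y) (f * g))
    (hrel1 : ∀ x ∈ g1, ∀ y ∈ g1, ∀ f g : A, ρ x f * ρ y g + ρ y g * ρ x f = ρ (B x y) (f * g))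
    {w : V} (hw : w ∈ idealAnnihilator ρ I) {x y : 𝔤} (hx : x ∈ g0 ∨ x ∈ g1)
    (hy : y ∈ g0 ∨ y ∈ g1) {f : A} (hf : f ∈ I) (g : A) : ρ x f (ρ y g w) = 0 := by
  rw [mem_idealAnnihilator] at hw
  rcases hx with hx | hx
  · exact Module.End.apply_apply_eq_zero_of_mul_sub_mul (hrel0 x hx y f g) (hw x f hf)
      (hw _ _ (I.mul_mem_right g hf))
  rcases hy with hy | hy
  · refine Module.End.apply_apply_eq_zero_of_mul_sub_mul (χ := -ρ (B y x) (g * f))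
      (by rw [← hrel0 y hy x g f, neg_sub]) (hw x f hf) ?_
    rw [LinearMap.neg_apply, hw _ _ (I.mul_mem_left g hf), neg_zero]
  · exact Module.End.apply_apply_eq_zero_of_mul_add_mul (hrel1 x hx y hy f g) (hw x f hf)
      (hw _ _ (I.mul_mem_right g hf))

theorem apply_mem_idealAnnihilator (hsplit : g0 ⊔ g1 = ⊤)
    (hrel0 : ∀ x ∈ g0, ∀ y : 𝔤, ∀ f g : A, ρ x f * ρ y g - ρ y g * ρ x f = ρ (B x y) (f * g))
    (hrel1 : ∀ x ∈ g1, ∀ y ∈ g1, ∀ f g : A, ρ x f * ρ y g + ρ y g * ρ x f = ρ (B x y) (f * g))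
    (y : 𝔤) (g : A) {w : V} (hw : w ∈ idealAnnihilator ρ I) :
    ρ y g w ∈ idealAnnihilator ρ I := by
  have hhom {x y : 𝔤} (hx : x ∈ g0 ∨ x ∈ g1) (hy : y ∈ g0 ∨ y ∈ g1) {f : A} (hf : f ∈ I) :
      ρ x f (ρ y g w) = 0 :=
    apply_apply_eq_zero_of_mem_idealAnnihilator hrel0 hrel1 hw hx hy hf g
  rw [mem_idealAnnihilator]
  intro x f hf
  obtain ⟨x0, hx0, x1, hx1, rfl⟩ := Submodule.mem_sup.1 (hsplit ▸ Submodule.mem_top : x ∈ g0 ⊔ g1)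
  obtain ⟨y0, hy0, y1, hy1, rfl⟩ := Submodule.mem_sup.1 (hsplit ▸ Submodule.mem_top : y ∈ g0 ⊔ g1)
  simp only [map_add, LinearMap.add_apply, hhom (.inl hx0) (.inl hy0) hf,
    hhom (.inl hx0) (.inr hy1) hf, hhom (.inr hx1) (.inl hy0) hf, hhom (.inr hx1) (.inr hy1) hf,
    add_zero]

end LoopModule

theorem stmt_11_general (𝔤 V : Type) [AddCommGroup 𝔤] [Module ℂ 𝔤]
    [AddCommGroup V] [Module ℂ V]
    (gm g0 gp : Submodule ℂ 𝔤) (hdecomp : gm ⊔ g0 ⊔ gp = ⊤)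
    (B : 𝔤 →ₗ[ℂ] 𝔤 →ₗ[ℂ] 𝔤)
    (ρ : 𝔤 →ₗ[ℂ] LaurentPolynomial ℂ →ₗ[ℂ] Module.End ℂ V)
    (hrel0 : ∀ x ∈ g0, ∀ y : 𝔤, ∀ f g : LaurentPolynomial ℂ,
      ρ x f * ρ y g - ρ y g * ρ x f = ρ (B x y) (f * g))
    (hrel1 : ∀ x ∈ gm ⊔ gp, ∀ y ∈ gm ⊔ gp, ∀ f g : LaurentPolynomial ℂ,
      ρ x f * ρ y g + ρ y g * ρ x f = ρ (B x y) (f * g))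
    (I : Ideal (LaurentPolynomial ℂ)) (V0 : Submodule ℂ V)
    (h0I : ∀ x ∈ g0, ∀ f ∈ I, ∀ v ∈ V0, ρ x f v = 0)
    (hpL : ∀ x ∈ gp, ∀ f : LaurentPolynomial ℂ, ∀ v ∈ V0, ρ x f v = 0)
    (hmI : ∀ x ∈ gm, ∀ f ∈ I, ∀ v ∈ V0, ρ x f v = 0)
    (hgen : ∀ W : Submodule ℂ V, V0 ≤ W →
      (∀ (x : 𝔤) (f : LaurentPolynomial ℂ), ∀ w ∈ W, ρ x f w ∈ W) → W = ⊤) :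
    ∀ (x : 𝔤), ∀ f ∈ I, ∀ v : V, ρ x f v = 0 := by
  have hsplit : g0 ⊔ (gm ⊔ gp) = ⊤ := by rw [← hdecomp, sup_left_comm, sup_assoc]
  have hV0 : V0 ≤ idealAnnihilator ρ I := by
    intro v hv
    rw [mem_idealAnnihilator]
    intro x f hf
    obtain ⟨xmx0, hxmx0, xp, hxp, rfl⟩ := Submodule.mem_sup.1 (hdecomp ▸ Submodule.mem_top :
      x ∈ gm ⊔ g0 ⊔ gp)
    obtain ⟨xm, hxm, x0, hx0, rfl⟩ := Submodule.mem_sup.1 hxmx0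
    simp only [map_add, LinearMap.add_apply, hmI xm hxm f hf v hv, h0I x0 hx0 f hf v hv,
      hpL xp hxp f v hv, add_zero]
  have htop := hgen _ hV0 fun y g _ ↦ apply_mem_idealAnnihilator hsplit hrel0 hrel1 y g
  intro x f hf v
  exact mem_idealAnnihilator.1 (htop ▸ Submodule.mem_top) x f hf

/-- Let `g = g₋₁ ⊕ g₀ ⊕ g₊₁` be a ℤ-graded Lie superalgebra with
`[g₊₁,g₊₁] = 0 = [g₋₁,g₋₁]`, presented by its super bracket `B` (so even
elements act by commutators and odd elements pair by anticommutators in any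
representation `ρ` of the loop superalgebra `L(g) = g ⊗ ℂ[t,t⁻¹]`).  If `I` is
an ideal of `ℂ[t,t⁻¹]` and `V` is an `L(g)`-module generated by a subspace
`V⁰` with `(g₀ ⊗ I)V⁰ = 0`, `(g₊₁ ⊗ ℂ[t,t⁻¹])V⁰ = 0` and `(g₋₁ ⊗ I)V⁰ = 0`,
then `(g ⊗ I)V = 0`. -/
theorem stmt_11 (𝔤 V : Type) [AddCommGroup 𝔤] [Module ℂ 𝔤]
    [AddCommGroup V] [Module ℂ V]
    (gm g0 gp : Submodule ℂ 𝔤) (hdecomp : gm ⊔ g0 ⊔ gp = ⊤)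
    (B : 𝔤 →ₗ[ℂ] 𝔤 →ₗ[ℂ] 𝔤)
    (hpp : ∀ x ∈ gp, ∀ y ∈ gp, B x y = 0)
    (hmm : ∀ x ∈ gm, ∀ y ∈ gm, B x y = 0)
    (h00 : ∀ x ∈ g0, ∀ y ∈ g0, B x y ∈ g0)
    (h0p : ∀ x ∈ g0, ∀ y ∈ gp, B x y ∈ gp)
    (h0m : ∀ x ∈ g0, ∀ y ∈ gm, B x y ∈ gm)
    (hpm : ∀ x ∈ gp, ∀ y ∈ gm, B x y ∈ g0)
    (ρ : 𝔤 →ₗ[ℂ] LaurentPolynomial ℂ →ₗ[ℂ] Module.End ℂ V)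
    (hrel0 : ∀ x ∈ g0, ∀ y : 𝔤, ∀ f g : LaurentPolynomial ℂ,
      ρ x f * ρ y g - ρ y g * ρ x f = ρ (B x y) (f * g))
    (hrel1 : ∀ x ∈ gm ⊔ gp, ∀ y ∈ gm ⊔ gp, ∀ f g : LaurentPolynomial ℂ,
      ρ x f * ρ y g + ρ y g * ρ x f = ρ (B x y) (f * g))
    (I : Ideal (LaurentPolynomial ℂ)) (V0 : Submodule ℂ V)
    (h0I : ∀ x ∈ g0, ∀ f ∈ I, ∀ v ∈ V0, ρ x f v = 0)
    (hpL : ∀ x ∈ gp, ∀ f : LaurentPolynomial ℂ, ∀ v ∈ V0, ρ x f v = 0)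
    (hmI : ∀ x ∈ gm, ∀ f ∈ I, ∀ v ∈ V0, ρ x f v = 0)
    (hgen : ∀ W : Submodule ℂ V, V0 ≤ W →
      (∀ (x : 𝔤) (f : LaurentPolynomial ℂ), ∀ w ∈ W, ρ x f w ∈ W) → W = ⊤) :
    ∀ (x : 𝔤), ∀ f ∈ I, ∀ v : V, ρ x f v = 0 :=
  stmt_11_general 𝔤 V gm g0 gp hdecomp B ρ hrel0 hrel1 I V0 h0I hpL hmI hgen
end

section
/- Let λ_1, …, λ_K be linear functionals on a complex vector space h and a_1, …, a_K distinct nonzero complex numbers. Define φ(h ⊗ t^m) = (∑_{j=1}^K a_j^m λ_j(h)) t^m for h ∈ h, m ∈ ℤ. If not all λ_j are zero, then the image of φ, i.e., the ℂ-span of {t^m : ∑_j a_j^m λ_j ≠ 0 in h*}, contains t^m for all m in some coset union whose generated subring of ℂ[t,t⁻¹] equals ℂ[t^r,t^{−r}] for some positive integer r. -/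
open LaurentPolynomial

/-! Since the Vandermonde matrix of the distinct `a_j` is invertible, `∑_j a_j^m λ_j` cannot
vanish for `K` consecutive values of `m` unless all `λ_j` vanish. So the set `S` of exponents
contains a positive and a negative integer, which makes the additive monoid generated by `S` a
group, hence equal to `rℤ` for some `r > 0`; the monomials with exponents in `S` and those with
exponents `±r` then generate the same subalgebra. -/

section Vandermonde

variable {F M : Type*} [Field F] [AddCommGroup M] [Module F M] {n : ℕ} {a : Fin n → F}

theorem eq_zero_of_forall_sum_zpow_smul_eq_zero (ha0 : ∀ j, a j ≠ 0) (hinj : Function.Injective a)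
    {c : Fin n → M} (m₀ : ℤ) (hc : ∀ i : Fin n, ∑ j, a j ^ (m₀ + i) • c j = 0) : c = 0 := by
  funext k
  refine (Module.forall_dual_apply_eq_zero_iff F (c k)).mp fun φ => ?_
  have hφ : (fun j => a j ^ m₀ * φ (c j)) = 0 := by
    refine Matrix.eq_zero_of_forall_pow_sum_mul_pow_eq_zero hinj fun i => ?_
    have := congrArg φ (hc i)
    simp only [map_sum, map_smul, smul_eq_mul, map_zero, zpow_add₀ (ha0 _), zpow_natCast] at this
    rw [← this]
    exact Finset.sum_congr rfl fun j _ => by ring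
  simpa [zpow_ne_zero m₀ (ha0 k)] using congrFun hφ k

theorem exists_sum_zpow_smul_ne_zero (ha0 : ∀ j, a j ≠ 0) (hinj : Function.Injective a)
    {c : Fin n → M} (hc : c ≠ 0) (m₀ : ℤ) : ∃ i : Fin n, ∑ j, a j ^ (m₀ + i) • c j ≠ 0 := by
  by_contra! h
  exact hc (eq_zero_of_forall_sum_zpow_smul_eq_zero ha0 hinj m₀ h)

end Vandermonde

theorem AddSubmonoid.closure_eq_toAddSubmonoid_closure_of_neg_subset {G : Type*} [AddGroup G]
    {S : Set G} (hS : -S ⊆ AddSubmonoid.closure S) :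
    AddSubmonoid.closure S = (AddSubgroup.closure S).toAddSubmonoid := by
  rw [AddSubgroup.closure_toAddSubmonoid]
  exact le_antisymm (AddSubmonoid.closure_mono Set.subset_union_left)
    (AddSubmonoid.closure_le.mpr (Set.union_subset AddSubmonoid.subset_closure hS))

theorem Int.neg_mem_addSubmonoidClosure {S : Set ℤ} {p q : ℤ} (hp : p ∈ S) (hp0 : 0 < p)
    (hq : q ∈ S) (hq0 : q < 0) {s : ℤ} (hs : s ∈ S) : -s ∈ AddSubmonoid.closure S := by
  have mem (k x : ℤ) (hk : 0 ≤ k) (hx : x ∈ S) : k * x ∈ AddSubmonoid.closure S := by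
    lift k to ℕ using hk
    exact_mod_cast AddSubmonoid.nsmul_mem _ (AddSubmonoid.subset_closure hx) k
  -- `-s = (-q - 1) s + s q` if `0 ≤ s`, and `-s = (p - 1) s + (-s) p` if `s < 0`
  rcases le_or_gt 0 s with hs0 | hs0
  · convert add_mem (mem (-q - 1) s (by omega) hs) (mem s q hs0 hq) using 1
    ring
  · convert add_mem (mem (p - 1) s (by omega) hs) (mem (-s) p (by omega) hp) using 1
    ring

theorem Int.exists_addSubmonoidClosure_eq_closure_pair {S : Set ℤ} {p q : ℤ} (hp : p ∈ S)
    (hp0 : 0 < p) (hq : q ∈ S) (hq0 : q < 0) :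
    ∃ r : ℕ, 0 < r ∧ AddSubmonoid.closure S = AddSubmonoid.closure {(r : ℤ), -(r : ℤ)} := by
  obtain ⟨g, hg⟩ := Int.subgroup_cyclic (AddSubgroup.closure S)
  refine ⟨g.natAbs, ?_, ?_⟩
  · refine Int.natAbs_pos.mpr fun hg0 => hp0.ne' ?_
    have hpS : p ∈ AddSubgroup.closure S := AddSubgroup.subset_closure hp
    rwa [hg, hg0, AddSubgroup.closure_singleton_zero, AddSubgroup.mem_bot] at hpS
  · rw [AddSubmonoid.closure_eq_toAddSubmonoid_closure_of_neg_subset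
      fun s hs => neg_neg s ▸ Int.neg_mem_addSubmonoidClosure hp hp0 hq hq0 hs, hg,
      ← AddSubgroup.zmultiples_eq_closure, ← Int.zmultiples_natAbs,
      AddSubgroup.zmultiples_eq_closure, AddSubgroup.closure_toAddSubmonoid,
      Set.neg_singleton, Set.singleton_union]

theorem LaurentPolynomial.adjoin_T_image_addSubmonoidClosure (R : Type*) [CommSemiring R]
    (S : Set ℤ) :
    Algebra.adjoin R (T '' (AddSubmonoid.closure S : Set ℤ)) =
      Algebra.adjoin R (T (R := R) '' S) := by
  refine le_antisymm (Algebra.adjoin_le ?_)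
    (Algebra.adjoin_mono (Set.image_mono AddSubmonoid.subset_closure))
  rintro _ ⟨m, hm, rfl⟩
  induction hm using AddSubmonoid.closure_induction with
  | mem x hx => exact Algebra.subset_adjoin ⟨x, hx, rfl⟩
  | zero => rw [T_zero]; exact one_mem _
  | add x y _ _ hx hy => rw [T_add]; exact mul_mem hx hy

theorem stmt_14_general (h : Type) [AddCommGroup h] [Module ℂ h]
    (K : ℕ) (lam : Fin K → Module.Dual ℂ h) (a : Fin K → ℂ)
    (ha0 : ∀ j, a j ≠ 0) (hinj : Function.Injective a)
    (hlam : ¬ ∀ j, lam j = 0) :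
    ∃ r : ℕ, 0 < r ∧
      Algebra.adjoin ℂ
          ((fun m : ℤ => LaurentPolynomial.T (R := ℂ) m) ''
            {m : ℤ | (∑ j : Fin K, (a j ^ m) • lam j) ≠ 0}) =
        Algebra.adjoin ℂ
          {LaurentPolynomial.T (R := ℂ) (r : ℤ),
            LaurentPolynomial.T (-(r : ℤ))} := by
  have hwindow := exists_sum_zpow_smul_ne_zero ha0 hinj (c := lam) fun h0 => hlam (congrFun h0)
  obtain ⟨i, hp⟩ := hwindow 1
  obtain ⟨i', hq⟩ := hwindow (-K)
  obtain ⟨r, hr0, hclosure⟩ := Int.exists_addSubmonoidClosure_eq_closure_pair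
    (S := {m : ℤ | (∑ j : Fin K, (a j ^ m) • lam j) ≠ 0}) hp (by omega) hq (by omega)
  refine ⟨r, hr0, ?_⟩
  rw [← adjoin_T_image_addSubmonoidClosure, hclosure, adjoin_T_image_addSubmonoidClosure,
    Set.image_pair]

/-- (Chari–Pressley.)  Let `λ₁,…,λ_K` be linear functionals on a complex
vector space `h`, not all zero, and `a₁,…,a_K` distinct nonzero complex
numbers.  The subring of `ℂ[t,t⁻¹]` generated by the monomials `t^m` with
`∑_j a_j^m λ_j ≠ 0` equals `ℂ[t^r, t^{-r}]` for some positive integer `r`. -/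
theorem stmt_14 (h : Type) [AddCommGroup h] [Module ℂ h]
    [FiniteDimensional ℂ h]
    (K : ℕ) (lam : Fin K → Module.Dual ℂ h) (a : Fin K → ℂ)
    (ha0 : ∀ j, a j ≠ 0) (hinj : Function.Injective a)
    (hlam : ¬ ∀ j, lam j = 0) :
    ∃ r : ℕ, 0 < r ∧
      Algebra.adjoin ℂ
          ((fun m : ℤ => LaurentPolynomial.T (R := ℂ) m) ''
            {m : ℤ | (∑ j : Fin K, (a j ^ m) • lam j) ≠ 0}) =
        Algebra.adjoin ℂ
          {LaurentPolynomial.T (R := ℂ) (r : ℤ),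
            LaurentPolynomial.T (-(r : ℤ))} :=
  stmt_14_general h K lam a ha0 hinj hlam
end
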